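/- Suppose A ∩ B = ∅ in the setting of I = (u_1, u_2, x_1^{e_1},...,x_n^{e_n}), with p = |P_1| and s = |P_2| (so p + s = n). Then the number of M-critical vertices of cardinality i+1 equals the sum over triples (a,b,c) of nonnegative integers with a + b + c = i+1, a < p, b < s, c ≤ 2 of C(p,a)·C(s,b)·C(2,c), where C denotes the binomial coefficient. -/

import Mathlib

/-! When `A ∩ B = ∅` we have `A = P₁` and `B = P₂`, and every generator lies in exactly one of
`P₁`, `P₂`, `{u₁, u₂}`. Each edge of `M` adds or removes `u₁` or `u₂`, which lie in neither `P₁`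
nor `P₂`, and requires `P₁ ⊆ T` or `P₂ ⊆ T`; conversely every such `T` is matched. So the critical
vertices are the `T` with `P₁ ⊄ T` and `P₂ ⊄ T`, and splitting `T` into its traces on the three
blocks counts them by the stated sum of products of binomial coefficients. -/

open Finset

def v1 {n : ℕ} : Fin 2 ⊕ Fin n := Sum.inl 0
def v2 {n : ℕ} : Fin 2 ⊕ Fin n := Sum.inl 1

/-- Generators of `I`: index `inl 0 ↦ u₁` (exponents `a`), `inl 1 ↦ u₂` (exponents `b`),
`inr i ↦ x_i^{e_i}`; monomials modeled as exponent vectors. -/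
def gen {n : ℕ} (a b e : Fin n → ℕ) : Fin 2 ⊕ Fin n → Fin n → ℕ :=
  Sum.elim (fun t => if t = 0 then a else b) (fun i j => if j = i then e i else 0)

/-- The lcm label `m_T` of a subset of generators (pointwise max of exponent vectors). -/
def mT {n : ℕ} (a b e : Fin n → ℕ) (T : Finset (Fin 2 ⊕ Fin n)) : Fin n → ℕ :=
  fun i => T.sup fun k => gen a b e k i

def P0 {n : ℕ} (a b : Fin n → ℕ) : Finset (Fin 2 ⊕ Fin n) :=
  (Finset.univ.filter fun i => a i = b i).image Sum.inr

def P1 {n : ℕ} (a b : Fin n → ℕ) : Finset (Fin 2 ⊕ Fin n) :=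
  (Finset.univ.filter fun i => b i < a i).image Sum.inr

def P2 {n : ℕ} (a b : Fin n → ℕ) : Finset (Fin 2 ⊕ Fin n) :=
  (Finset.univ.filter fun i => a i < b i).image Sum.inr

def setA {n : ℕ} (a : Fin n → ℕ) : Finset (Fin 2 ⊕ Fin n) :=
  (Finset.univ.filter fun i => 0 < a i).image Sum.inr

def setB {n : ℕ} (b : Fin n → ℕ) : Finset (Fin 2 ⊕ Fin n) :=
  (Finset.univ.filter fun i => 0 < b i).image Sum.inr

/-- The matching `M` on the Hasse diagram of `2^[n+2]`: `MM a b T T'` means `(T,T')` is an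
edge of the matching, given by the four families of the paper. -/
def MM {n : ℕ} (a b : Fin n → ℕ) (T T' : Finset (Fin 2 ⊕ Fin n)) : Prop :=
  (v1 ∈ T ∧ v2 ∈ T ∧ P1 a b ⊆ T ∧ T' = T.erase v1) ∨
  (v1 ∈ T ∧ v2 ∈ T ∧ ¬ P1 a b ⊆ T ∧ P2 a b ⊆ T ∧ T' = T.erase v2) ∨
  (v1 ∈ T ∧ v2 ∉ T ∧ setA a ⊆ T ∧ T' = T.erase v1) ∨
  (v1 ∉ T ∧ v2 ∈ T ∧ setB b ⊆ T ∧ T ≠ Finset.univ.erase v1 ∧ T' = T.erase v2)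

/-- `T` is an `M`-critical vertex: it is incident to no edge of the matching. -/
def critical {n : ℕ} (a b : Fin n → ℕ) (T : Finset (Fin 2 ⊕ Fin n)) : Prop :=
  ∀ T', ¬ MM a b T T' ∧ ¬ MM a b T' T

section Counting

variable {α : Type*} [DecidableEq α] {X Y Z T : Finset α}

lemma not_subset_iff_card_inter_lt : ¬X ⊆ T ↔ #(T ∩ X) < #X := by
  rw [← inter_eq_right, not_iff_comm, not_lt]
  exact ⟨eq_of_subset_of_card_le inter_subset_right, fun h => by rw [h]⟩

lemma card_eq_card_inter_add_card_inter (hXY : Disjoint X Y) (hT : T ⊆ X ∪ Y) :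
    #T = #(T ∩ X) + #(T ∩ Y) := by
  rw [← card_union_of_disjoint (hXY.mono inter_subset_right inter_subset_right),
    ← inter_union_distrib_left, inter_eq_left.2 hT]

lemma card_filter_powerset_union (hXY : Disjoint X Y) (P Q : Finset α → Prop)
    [DecidablePred P] [DecidablePred Q] :
    #{T ∈ (X ∪ Y).powerset | P (T ∩ X) ∧ Q (T ∩ Y)} =
      #{U ∈ X.powerset | P U} * #{V ∈ Y.powerset | Q V} := by
  have union_inter_left {U V : Finset α} (hU : U ⊆ X) (hV : V ⊆ Y) : (U ∪ V) ∩ X = U := by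
    rw [union_inter_distrib_right, inter_eq_left.2 hU,
      disjoint_iff_inter_eq_empty.1 (hXY.symm.mono_left hV), union_empty]
  have union_inter_right {U V : Finset α} (hU : U ⊆ X) (hV : V ⊆ Y) : (U ∪ V) ∩ Y = V := by
    rw [union_inter_distrib_right, inter_eq_left.2 hV,
      disjoint_iff_inter_eq_empty.1 (hXY.mono_left hU), empty_union]
  rw [← card_product]
  refine card_nbij' (fun T => (T ∩ X, T ∩ Y)) (fun q => q.1 ∪ q.2) ?_ ?_ ?_ ?_
  · intro T hT
    simp only [coe_filter, mem_powerset, Set.mem_ofPred_eq, coe_product, Set.mem_prod] at hT ⊢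
    exact ⟨⟨inter_subset_right, hT.2.1⟩, inter_subset_right, hT.2.2⟩
  · rintro ⟨U, V⟩ hq
    simp only [coe_product, coe_filter, mem_powerset, Set.mem_prod, Set.mem_ofPred_eq] at hq ⊢
    obtain ⟨⟨hU, hPU⟩, hV, hQV⟩ := hq
    rw [union_inter_left hU hV, union_inter_right hU hV]
    exact ⟨union_subset_union hU hV, hPU, hQV⟩
  · intro T hT
    simp only [coe_filter, mem_powerset, Set.mem_ofPred_eq] at hT
    change T ∩ X ∪ T ∩ Y = T
    rw [← inter_union_distrib_left, inter_eq_left.2 hT.1]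
  · rintro ⟨U, V⟩ hq
    simp only [coe_product, coe_filter, mem_powerset, Set.mem_prod, Set.mem_ofPred_eq] at hq
    change ((U ∪ V) ∩ X, (U ∪ V) ∩ Y) = (U, V)
    rw [union_inter_left hq.1.1 hq.2.1, union_inter_right hq.1.1 hq.2.1]

lemma card_filter_powerset_card_inter (hXY : Disjoint X Y) (hXZ : Disjoint X Z)
    (hYZ : Disjoint Y Z) (x y z : ℕ) :
    #{T ∈ (X ∪ Y ∪ Z).powerset | #(T ∩ X) = x ∧ #(T ∩ Y) = y ∧ #(T ∩ Z) = z} =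
      (#X).choose x * (#Y).choose y * (#Z).choose z := by
  have h := card_filter_powerset_union (disjoint_union_left.2 ⟨hXZ, hYZ⟩)
    (fun U => #(U ∩ X) = x ∧ #(U ∩ Y) = y) (fun V => #V = z)
  simp only [inter_assoc, union_inter_cancel_left, union_inter_cancel_right, and_assoc] at h
  rw [h, card_filter_powerset_union hXY (fun U => #U = x) (fun V => #V = y)]
  simp only [← powersetCard_eq_filter, card_powersetCard]

lemma card_filter_powerset_not_subset (hXY : Disjoint X Y) (hXZ : Disjoint X Z)
    (hYZ : Disjoint Y Z) (m : ℕ) :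
    #{T ∈ (X ∪ Y ∪ Z).powerset | (¬X ⊆ T ∧ ¬Y ⊆ T) ∧ #T = m} =
      ∑ x ∈ range (m + 1), ∑ y ∈ range (m + 1), ∑ z ∈ range (m + 1),
        if x + y + z = m ∧ x < #X ∧ y < #Y ∧ z ≤ #Z then
          (#X).choose x * (#Y).choose y * (#Z).choose z
        else 0 := by
  have card_eq {T : Finset α} (hT : T ⊆ X ∪ Y ∪ Z) : #T = #(T ∩ X) + #(T ∩ Y) + #(T ∩ Z) := by
    rw [card_eq_card_inter_add_card_inter (disjoint_union_left.2 ⟨hXZ, hYZ⟩) hT,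
      card_eq_card_inter_add_card_inter hXY (inter_subset_right (s₁ := T)),
      inter_assoc, inter_assoc, union_inter_cancel_left, union_inter_cancel_right]
  have fiber_iff {T : Finset α} (hT : T ⊆ X ∪ Y ∪ Z) (x y z : ℕ) :
      ((¬X ⊆ T ∧ ¬Y ⊆ T) ∧ #T = m) ∧ (#(T ∩ X), #(T ∩ Y), #(T ∩ Z)) = (x, y, z) ↔
        (x + y + z = m ∧ x < #X ∧ y < #Y ∧ z ≤ #Z) ∧
          (#(T ∩ X) = x ∧ #(T ∩ Y) = y ∧ #(T ∩ Z) = z) := by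
    have := card_le_card (inter_subset_right (s₁ := T) (s₂ := Z))
    rw [not_subset_iff_card_inter_lt, not_subset_iff_card_inter_lt, card_eq hT, Prod.mk.injEq,
      Prod.mk.injEq]
    constructor
    · rintro ⟨⟨⟨hX, hY⟩, rfl⟩, rfl, rfl, rfl⟩
      exact ⟨⟨rfl, hX, hY, this⟩, rfl, rfl, rfl⟩
    · rintro ⟨⟨rfl, hX, hY, -⟩, hx, hy, hz⟩
      subst hx hy hz
      exact ⟨⟨⟨hX, hY⟩, rfl⟩, rfl, rfl, rfl⟩
  rw [card_eq_sum_card_fiberwise (f := fun T => (#(T ∩ X), #(T ∩ Y), #(T ∩ Z)))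
    (t := range (m + 1) ×ˢ range (m + 1) ×ˢ range (m + 1)), sum_product]
  · refine sum_congr rfl fun x _ => ?_
    rw [sum_product]
    refine sum_congr rfl fun y _ => sum_congr rfl fun z _ => ?_
    rw [filter_filter, filter_congr fun T hT => fiber_iff (mem_powerset.1 hT) x y z]
    split_ifs with h
    · simp only [h, true_and]
      exact card_filter_powerset_card_inter hXY hXZ hYZ x y z
    · simp only [h, false_and, filter_false, card_empty]
  · intro T hT
    simp only [coe_filter, mem_powerset, Set.mem_ofPred_eq] at hT
    have := card_eq hT.1
    simp only [coe_product, coe_range, Set.mem_prod, Set.mem_Iio]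
    omega

end Counting

section Matching

variable {n : ℕ} {a b : Fin n → ℕ}

lemma v1_ne_v2 : (v1 : Fin 2 ⊕ Fin n) ≠ v2 := by simp [v1, v2]

lemma v1_notMem_P1 : v1 ∉ P1 a b := by simp [v1, P1]
lemma v2_notMem_P1 : v2 ∉ P1 a b := by simp [v2, P1]
lemma v1_notMem_P2 : v1 ∉ P2 a b := by simp [v1, P2]
lemma v2_notMem_P2 : v2 ∉ P2 a b := by simp [v2, P2]

lemma P1_subset_univ_erase_v1 : P1 a b ⊆ univ.erase v1 :=
  fun _ hk => mem_erase.2 ⟨ne_of_mem_of_not_mem hk v1_notMem_P1, mem_univ _⟩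

lemma subset_or_subset_of_MM {T T' : Finset (Fin 2 ⊕ Fin n)} (h : MM a b T T')
    (hA : setA a = P1 a b) (hB : setB b = P2 a b) :
    (P1 a b ⊆ T ∨ P2 a b ⊆ T) ∧ (P1 a b ⊆ T' ∨ P2 a b ⊆ T') := by
  rw [MM, hA, hB] at h
  rcases h with ⟨-, -, h, rfl⟩ | ⟨-, -, -, h, rfl⟩ | ⟨-, -, h, rfl⟩ | ⟨-, -, h, -, rfl⟩
  all_goals simp [subset_erase, v1_notMem_P1, v2_notMem_P2, h]

lemma exists_MM_of_subset {T : Finset (Fin 2 ⊕ Fin n)} (h : P1 a b ⊆ T ∨ P2 a b ⊆ T)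
    (hA : setA a = P1 a b) (hB : setB b = P2 a b) :
    ∃ T', MM a b T T' ∨ MM a b T' T := by
  have not_subset_insert {v} (hv : v ∉ P1 a b) (h1 : ¬P1 a b ⊆ T) : ¬P1 a b ⊆ insert v T := by
    rwa [subset_insert_iff_of_notMem hv]
  have ne_univ_erase {S : Finset (Fin 2 ⊕ Fin n)} (h1 : ¬P1 a b ⊆ S) : S ≠ univ.erase v1 :=
    fun hS => h1 (hS ▸ P1_subset_univ_erase_v1)
  simp only [MM, hA, hB]
  -- families 2 and 4 of `M` need `¬P1 a b ⊆ T`, so the case `P1 a b ⊆ T` is settled first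
  by_cases h1 : P1 a b ⊆ T
  · by_cases hv1 : v1 ∈ T
    · refine ⟨T.erase v1, Or.inl ?_⟩
      by_cases hv2 : v2 ∈ T <;> simp [hv1, hv2, h1]
    · refine ⟨insert v1 T, Or.inr ?_⟩
      by_cases hv2 : v2 ∈ T <;>
        simp [hv1, hv2, h1, v1_ne_v2.symm, subset_insert_iff_of_notMem v1_notMem_P1]
  · have h2 := h.resolve_left h1
    by_cases hv2 : v2 ∈ T
    · refine ⟨T.erase v2, Or.inl ?_⟩
      by_cases hv1 : v1 ∈ T <;> simp [hv1, hv2, h1, h2, ne_univ_erase h1]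
    · refine ⟨insert v2 T, Or.inr ?_⟩
      by_cases hv1 : v1 ∈ T <;>
        simp [hv1, hv2, h2, v1_ne_v2, not_subset_insert v2_notMem_P1 h1,
          ne_univ_erase (not_subset_insert v2_notMem_P1 h1),
          subset_insert_iff_of_notMem v2_notMem_P2]

lemma critical_iff (hA : setA a = P1 a b) (hB : setB b = P2 a b) (T : Finset (Fin 2 ⊕ Fin n)) :
    critical a b T ↔ ¬P1 a b ⊆ T ∧ ¬P2 a b ⊆ T := by
  refine ⟨fun hT => ?_, fun ⟨h1, h2⟩ T' => ?_⟩
  · rw [← not_or]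
    intro h
    obtain ⟨T', hT' | hT'⟩ := exists_MM_of_subset h hA hB
    exacts [(hT T').1 hT', (hT T').2 hT']
  · exact ⟨fun h => by have := (subset_or_subset_of_MM h hA hB).1; tauto,
      fun h => by have := (subset_or_subset_of_MM h hA hB).2; tauto⟩

lemma eq_zero_or_eq_zero_of_setA_inter_setB (hAB : setA a ∩ setB b = ∅) (j : Fin n) :
    a j = 0 ∨ b j = 0 := by
  by_contra! h
  have : Sum.inr j ∈ setA a ∩ setB b := by
    simp [setA, setB, Nat.pos_of_ne_zero h.1, Nat.pos_of_ne_zero h.2]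
  simp [hAB] at this

lemma setA_eq_P1 (hAB : setA a ∩ setB b = ∅) : setA a = P1 a b := by
  unfold setA P1
  congr 1
  ext j
  have := eq_zero_or_eq_zero_of_setA_inter_setB hAB j
  simp only [mem_filter, mem_univ, true_and]
  omega

lemma setB_eq_P2 (hAB : setA a ∩ setB b = ∅) : setB b = P2 a b := by
  unfold setB P2
  congr 1
  ext j
  have := eq_zero_or_eq_zero_of_setA_inter_setB hAB j
  simp only [mem_filter, mem_univ, true_and]
  omega

lemma disjoint_P1_P2 : Disjoint (P1 a b) (P2 a b) := by
  simp only [P1, P2, disjoint_left, mem_image, mem_filter, mem_univ, true_and]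
  rintro _ ⟨j, hj, rfl⟩ ⟨j', hj', hjj'⟩
  cases hjj'
  omega

lemma disjoint_P1_pair : Disjoint (P1 a b) {v1, v2} := by
  simp [v1_notMem_P1, v2_notMem_P1]

lemma disjoint_P2_pair : Disjoint (P2 a b) {v1, v2} := by
  simp [v1_notMem_P2, v2_notMem_P2]

lemma P1_union_P2_union_pair (hab : ∀ i, 0 < a i + b i) (hAB : setA a ∩ setB b = ∅) :
    P1 a b ∪ P2 a b ∪ {v1, v2} = univ := by
  refine eq_univ_of_forall fun k => ?_
  rcases k with j | j
  · fin_cases j <;> simp [v1, v2]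
  · have := hab j
    have := eq_zero_or_eq_zero_of_setA_inter_setB hAB j
    simp only [P1, P2, mem_union, mem_image, mem_filter, mem_univ, true_and, Sum.inr.injEq,
      exists_eq_right, mem_insert, mem_singleton, v1, v2, reduceCtorEq, or_false]
    omega

end Matching

theorem stmt15_general (n : ℕ) (a b : Fin n → ℕ) (hab : ∀ i, 0 < a i + b i)
    (hAB : setA a ∩ setB b = ∅)
    (p s : ℕ) (hp : (P1 a b).card = p) (hs : (P2 a b).card = s) (i : ℕ) :
    {T : Finset (Fin 2 ⊕ Fin n) | critical a b T ∧ T.card = i + 1}.ncard =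
      ∑ x ∈ Finset.range (i + 2), ∑ y ∈ Finset.range (i + 2),
        ∑ z ∈ Finset.range (i + 2),
          if x + y + z = i + 1 ∧ x < p ∧ y < s ∧ z ≤ 2 then
            p.choose x * s.choose y * Nat.choose 2 z
          else 0 := by
  have hcount := card_filter_powerset_not_subset (disjoint_P1_P2 (a := a) (b := b))
    disjoint_P1_pair disjoint_P2_pair (i + 1)
  rw [P1_union_P2_union_pair hab hAB, powerset_univ, hp, hs, card_pair v1_ne_v2] at hcount
  rw [← hcount, ← Set.ncard_coe_finset]
  congr 1
  ext T
  simp [critical_iff (setA_eq_P1 hAB) (setB_eq_P2 hAB)]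

/-- Betti numbers when `A ∩ B = ∅`, with `p = |P₁|`, `s = |P₂|`: the number
of `M`-critical vertices of cardinality `i+1` equals
`∑_{x+y+z=i+1, x<p, y<s, z≤2} C(p,x)·C(s,y)·C(2,z)`. -/
theorem stmt15 (n : ℕ) (a b e : Fin n → ℕ) (hab : ∀ i, 0 < a i + b i)
    (he : ∀ i, max (a i) (b i) < e i)
    (hAB : setA a ∩ setB b = ∅)
    (p s : ℕ) (hp : (P1 a b).card = p) (hs : (P2 a b).card = s) (i : ℕ) :
    {T : Finset (Fin 2 ⊕ Fin n) | critical a b T ∧ T.card = i + 1}.ncard =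
      ∑ x ∈ Finset.range (i + 2), ∑ y ∈ Finset.range (i + 2),
        ∑ z ∈ Finset.range (i + 2),
          if x + y + z = i + 1 ∧ x < p ∧ y < s ∧ z ≤ 2 then
            p.choose x * s.choose y * Nat.choose 2 z
          else 0 :=
  stmt15_general n a b hab hAB p s hp hs i
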